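/- arXiv:math/0202267 — 4 statements merged into one kernel-verified Lean document; each statement's English description precedes it below -/
import Mathlib

section
/- The number of 3×3 matrices with nonnegative integer entries in which every row and every column sums to t equals 3·binom(t+3, 4) + binom(t+2, 2). -/
/-!
The first two rows `r₁, r₂` of such a matrix are compositions of `t` into three parts with
`r₁ j + r₂ j ≤ t` in every column `j`, and they determine the third row. Among all `C(t+2,2)²`
pairs of compositions at most one column can overflow, since the six entries total `2t`. Deleting
the overflowing column `j` identifies the pairs overflowing at `j` with the 4-tuples of sum `< t`,
of which there are `C(t+3,4)` by stars and bars. Hence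
`H₃(t) = C(t+2,2)² - 3 C(t+3,4) = 3 C(t+3,4) + C(t+2,2)`.
-/

open Finset

section StarsAndBars

variable {ι : Type*} [Fintype ι]

theorem card_subtype_sum_eq (t : ℕ) :
    Nat.card {x : ι → ℕ // ∑ i, x i = t} = (Fintype.card ι + t - 1).choose t := by
  classical
  rw [← Nat.card_congr (Sym.equivNatSumOfFintype ι t), Nat.card_eq_fintype_card,
    Sym.card_sym_eq_choose]

def subtypeSumLeEquiv (t : ℕ) :
    {x : ι → ℕ // ∑ i, x i ≤ t} ≃ {y : Option ι → ℕ // ∑ i, y i = t} where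
  toFun x := ⟨fun o => o.elim (t - ∑ i, x.1 i) x.1, by
    have := x.2
    simp only [Fintype.sum_option, Option.elim]
    omega⟩
  invFun y := ⟨fun i => y.1 (some i), by
    have := y.2
    rw [Fintype.sum_option] at this
    exact (Nat.le_add_left _ _).trans_eq this⟩
  left_inv _ := rfl
  right_inv y := by
    have := y.2
    rw [Fintype.sum_option] at this
    ext (_ | i)
    · simp only [Option.elim]
      omega
    · rfl

theorem card_subtype_sum_le (t : ℕ) :
    Nat.card {x : ι → ℕ // ∑ i, x i ≤ t} = (t + Fintype.card ι).choose t := by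
  rw [Nat.card_congr (subtypeSumLeEquiv t), card_subtype_sum_eq, Fintype.card_option]
  congr 1
  omega

theorem card_subtype_sum_lt [Nonempty ι] (t : ℕ) :
    Nat.card {x : ι → ℕ // ∑ i, x i < t} =
      (t + Fintype.card ι - 1).choose (Fintype.card ι) := by
  have hι := Fintype.card_pos (α := ι)
  cases t with
  | zero =>
    simp only [Nat.not_lt_zero, Nat.card_of_isEmpty]
    exact (Nat.choose_eq_zero_of_lt (by omega)).symm
  | succ t =>
    simp only [Nat.lt_succ_iff, card_subtype_sum_le]
    rw [Nat.choose_symm_add]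
    congr 1
    omega

end StarsAndBars

section CompositionPairs

variable {ι : Type*} [Fintype ι] [DecidableEq ι]

def completeAt (j : ι) (t : ℕ) (y : {i // i ≠ j} → ℕ) (i : ι) : ℕ :=
  if h : i = j then t - ∑ k, y k else y ⟨i, h⟩

section

variable {j : ι} {t : ℕ}

lemma completeAt_self (y : {i // i ≠ j} → ℕ) : completeAt j t y j = t - ∑ k, y k :=
  dif_pos rfl

lemma completeAt_of_ne (y : {i // i ≠ j} → ℕ) (i : {i // i ≠ j}) : completeAt j t y i = y i :=
  dif_neg i.2

lemma sum_completeAt {y : {i // i ≠ j} → ℕ} (hy : ∑ i, y i ≤ t) :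
    ∑ i, completeAt j t y i = t := by
  rw [Fintype.sum_eq_add_sum_subtype_ne _ j, completeAt_self]
  simp only [completeAt_of_ne]
  omega

lemma completeAt_restrict {x : ι → ℕ} (hx : ∑ i, x i = t) :
    completeAt j t (fun i : {i // i ≠ j} => x i) = x := by
  rw [Fintype.sum_eq_add_sum_subtype_ne _ j] at hx
  ext i
  by_cases h : i = j
  · subst h
    rw [completeAt_self]
    omega
  · exact completeAt_of_ne _ ⟨i, h⟩

end

variable (t : ℕ)

def compositionPairs : Finset ((ι → ℕ) × (ι → ℕ)) :=
  piAntidiag univ t ×ˢ piAntidiag univ t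

def goodPairs : Finset ((ι → ℕ) × (ι → ℕ)) :=
  (compositionPairs t).filter fun p => ∀ j, p.1 j + p.2 j ≤ t

def overflowAt (j : ι) : Finset ((ι → ℕ) × (ι → ℕ)) :=
  (compositionPairs t).filter fun p => t < p.1 j + p.2 j

variable {t}

lemma mem_compositionPairs {p : (ι → ℕ) × (ι → ℕ)} :
    p ∈ compositionPairs t ↔ ∑ i, p.1 i = t ∧ ∑ i, p.2 i = t := by
  simp [compositionPairs]

lemma mem_goodPairs {p : (ι → ℕ) × (ι → ℕ)} :
    p ∈ goodPairs t ↔ (∑ i, p.1 i = t ∧ ∑ i, p.2 i = t) ∧ ∀ j, p.1 j + p.2 j ≤ t := by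
  rw [goodPairs, mem_filter, mem_compositionPairs]

lemma mem_overflowAt {p : (ι → ℕ) × (ι → ℕ)} {j : ι} :
    p ∈ overflowAt t j ↔ (∑ i, p.1 i = t ∧ ∑ i, p.2 i = t) ∧ t < p.1 j + p.2 j := by
  rw [overflowAt, mem_filter, mem_compositionPairs]

variable (t)

lemma card_piAntidiag_univ :
    #(piAntidiag (univ : Finset ι) t) = (Fintype.card ι + t - 1).choose t := by
  rw [← Nat.card_eq_finsetCard, ← card_subtype_sum_eq]
  exact Nat.card_congr (Equiv.subtypeEquivRight (by simp))

lemma card_compositionPairs :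
    #(compositionPairs (ι := ι) t) = (Fintype.card ι + t - 1).choose t ^ 2 := by
  rw [compositionPairs, card_product, card_piAntidiag_univ, sq]

lemma pairwiseDisjoint_overflowAt :
    ((univ : Finset ι) : Set ι).PairwiseDisjoint (overflowAt t) := by
  intro i _ j _ hij
  refine disjoint_left.2 fun p hpi hpj => ?_
  rw [mem_overflowAt] at hpi hpj
  have := add_le_sum (f := fun k => p.1 k + p.2 k) (fun _ _ => Nat.zero_le _)
    (mem_univ i) (mem_univ j) hij
  rw [sum_add_distrib, hpi.1.1, hpi.1.2] at this
  omega

lemma card_goodPairs_add_sum_card_overflowAt :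
    #(goodPairs (ι := ι) t) + ∑ j : ι, #(overflowAt t j) = #(compositionPairs (ι := ι) t) := by
  rw [← card_biUnion (pairwiseDisjoint_overflowAt t), goodPairs,
    ← card_filter_add_card_filter_not (s := compositionPairs t)
      (fun p : (ι → ℕ) × (ι → ℕ) => ∀ j, p.1 j + p.2 j ≤ t)]
  congr 2
  ext p
  simp [overflowAt]

def overflowAtEquiv (j : ι) :
    overflowAt t j ≃ {w : {i // i ≠ j} ⊕ {i // i ≠ j} → ℕ // ∑ i, w i < t} where
  toFun p := ⟨Sum.elim (fun i => p.1.1 i) (fun i => p.1.2 i), by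
    obtain ⟨⟨hx, hy⟩, hj⟩ := mem_overflowAt.1 p.2
    rw [Fintype.sum_eq_add_sum_subtype_ne _ j] at hx hy
    simp only [Fintype.sum_sum_type, Sum.elim_inl, Sum.elim_inr]
    omega⟩
  invFun w := ⟨(completeAt j t fun i => w.1 (.inl i), completeAt j t fun i => w.1 (.inr i)), by
    have hw := w.2
    rw [Fintype.sum_sum_type] at hw
    rw [mem_overflowAt]
    dsimp only
    refine ⟨⟨sum_completeAt ?_, sum_completeAt ?_⟩, ?_⟩
    · omega
    · omega
    · rw [completeAt_self, completeAt_self]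
      omega⟩
  left_inv p := by
    obtain ⟨⟨hx, hy⟩, -⟩ := mem_overflowAt.1 p.2
    exact Subtype.ext (Prod.ext (completeAt_restrict hx) (completeAt_restrict hy))
  right_inv w := by
    ext (i | i)
    · exact completeAt_of_ne (fun i => w.1 (.inl i)) i
    · exact completeAt_of_ne (fun i => w.1 (.inr i)) i

lemma card_overflowAt [Nontrivial ι] (j : ι) :
    #(overflowAt t j) =
      (t + 2 * (Fintype.card ι - 1) - 1).choose (2 * (Fintype.card ι - 1)) := by
  obtain ⟨i, hi⟩ := exists_ne j
  have : Nonempty {i // i ≠ j} := ⟨⟨i, hi⟩⟩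
  rw [← Nat.card_eq_finsetCard, Nat.card_congr (overflowAtEquiv t j), card_subtype_sum_lt]
  simp [Fintype.card_subtype_compl, two_mul]

end CompositionPairs

lemma choose_two_sq (t : ℕ) :
    (t + 2).choose 2 ^ 2 = 6 * (t + 3).choose 4 + (t + 2).choose 2 := by
  have h2 : 2 * (t + 2).choose 2 = (t + 2) * (t + 1) := by
    have := Nat.descFactorial_eq_factorial_mul_choose (t + 2) 2
    simp only [Nat.descFactorial, Nat.add_one_sub_one, tsub_zero, mul_one,
      Nat.factorial_two] at this
    linarith
  have h4 : 24 * (t + 3).choose 4 = (t + 3) * (t + 2) * (t + 1) * t := by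
    have := Nat.descFactorial_eq_factorial_mul_choose (t + 3) 4
    simp only [Nat.descFactorial, add_tsub_cancel_right, show t + 3 - 2 = t + 1 by omega,
      Nat.add_one_sub_one, tsub_zero, mul_one, Nat.factorial, Nat.succ_eq_add_one, Nat.reduceAdd,
      zero_add, Nat.reduceMul] at this
    linarith
  nlinarith [congrArg (· ^ 2) h2]

def matrixEquivGoodPairs (t : ℕ) :
    {M : Matrix (Fin 3) (Fin 3) ℕ // (∀ i, ∑ j, M i j = t) ∧ ∀ j, ∑ i, M i j = t} ≃
      goodPairs (ι := Fin 3) t where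
  toFun M := ⟨(M.1 0, M.1 1), by
    obtain ⟨M, hrow, hcol⟩ := M
    refine mem_goodPairs.2 ⟨⟨hrow 0, hrow 1⟩, fun j => ?_⟩
    have := hcol j
    rw [Fin.sum_univ_three] at this
    show M 0 j + M 1 j ≤ t
    omega⟩
  invFun p := ⟨Matrix.of ![p.1.1, p.1.2, fun j => t - p.1.1 j - p.1.2 j], by
    obtain ⟨⟨hx, hy⟩, hle⟩ := mem_goodPairs.1 p.2
    refine ⟨fun i => ?_, fun j => ?_⟩
    · fin_cases i
      · exact hx
      · exact hy
      · rw [Fin.sum_univ_three] at hx hy ⊢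
        have := hle 0; have := hle 1; have := hle 2
        simp only [Fin.reduceFinMk, Matrix.of_apply, Matrix.cons_val]
        omega
    · have := hle j
      simp only [Matrix.of_apply, Fin.sum_univ_three, Matrix.cons_val]
      omega⟩
  left_inv M := by
    obtain ⟨M, -, hcol⟩ := M
    ext i j
    have := hcol j
    rw [Fin.sum_univ_three] at this
    fin_cases i
    · rfl
    · rfl
    · simp only [Fin.reduceFinMk, Matrix.of_apply, Matrix.cons_val]
      omega
  right_inv _ := rfl

/-- MacMahon's formula: the number of 3×3 nonnegative-integer matrices with all
row and column sums equal to `t` is `3 * C(t+3, 4) + C(t+2, 2)`. -/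
theorem birkhoff_H3_macmahon (t : ℕ) :
    Nat.card {M : Matrix (Fin 3) (Fin 3) ℕ //
      (∀ i, ∑ j, M i j = t) ∧ (∀ j, ∑ i, M i j = t)} =
      3 * Nat.choose (t + 3) 4 + Nat.choose (t + 2) 2 := by
  have hsplit := card_goodPairs_add_sum_card_overflowAt (ι := Fin 3) t
  simp only [card_overflowAt, card_compositionPairs, Fintype.card_fin, sum_const, card_univ,
    smul_eq_mul] at hsplit
  rw [show 2 * (3 - 1) = 4 from rfl, show 3 + t - 1 = t + 2 by omega,
    show t + 4 - 1 = t + 3 by omega, Nat.choose_symm_add] at hsplit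
  rw [Nat.card_congr (matrixEquivGoodPairs t), Nat.card_eq_finsetCard]
  have := choose_two_sq t
  omega
end

section
/- The number of 3×3 semi-magic squares with line sum t equals (1/8)t^4 + (3/4)t^3 + (15/8)t^2 + (9/4)t + 1. -/
/-!
By Birkhoff's theorem every 3×3 semi-magic square with line sum `t` is `∑ σ, v σ • P σ` over the
six permutation matrices `P σ`, with `∑ σ, v σ = t`. The only linear relation among the `P σ` is
that the three even and the three odd ones both sum to the all-ones matrix, so the representation
becomes unique once some even coefficient is required to vanish. The coefficient vectors violating
this are, after subtracting `1` from each even coefficient, exactly the vectors with sum `t - 3`.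
Stars and bars therefore counts the squares as `C(t + 5, 5) - C(t + 2, 5)`, which expands to the
quartic.
-/

open Finset

lemma natCard_sum_fin_eq_choose (k n : ℕ) :
    Nat.card {v : Fin (k + 1) → ℕ // ∑ i, v i = n} = (n + k).choose k := by
  rw [← Nat.card_congr (Sym.equivNatSumOfFintype _ n), Nat.card_eq_fintype_card,
    Sym.card_sym_eq_choose, Fintype.card_fin, Nat.add_right_comm, Nat.add_sub_cancel,
    add_comm k, Nat.choose_symm_add]

lemma natCard_sum_add_fin_eq_choose {k : ℕ} (hk : k ≠ 0) (m n : ℕ) :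
    Nat.card {v : Fin (k + 1) → ℕ // ∑ i, v i + m = n} = (n + k - m).choose k := by
  rcases lt_or_ge n m with hnm | hmn
  · rw [Nat.choose_eq_zero_of_lt (show n + k - m < k by omega), Nat.card_eq_zero]
    refine Or.inl ⟨fun ⟨v, hv⟩ => ?_⟩
    omega
  · obtain ⟨s, rfl⟩ := Nat.exists_eq_add_of_le' hmn
    simp only [add_left_inj]
    rw [natCard_sum_fin_eq_choose, Nat.add_right_comm, Nat.add_sub_cancel]

lemma natCard_subtype_and_add_natCard_subtype_and_not {α : Type*} (p q : α → Prop)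
    [Finite {x // p x}] :
    Nat.card {x // p x ∧ q x} + Nat.card {x // p x ∧ ¬ q x} = Nat.card {x // p x} :=
  Set.ncard_inter_add_ncard_sdiff_eq_ncard {x | p x} {x | q x} (Set.finite_coe_iff.mp ‹_›)

lemma cast_choose_five {K : Type*} [Field K] [CharZero K] (n : ℕ) :
    (n.choose 5 : K) = n * (n - 1) * (n - 2) * (n - 3) * (n - 4) / 120 := by
  rw [Nat.cast_choose_eq_descPochhammer_div]
  simp [descPochhammer_succ_right, Nat.factorial]

def IsSemiMagic {n α : Type*} [Fintype n] [AddCommMonoid α] (t : α) (M : Matrix n n α) : Prop :=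
  (∀ i, ∑ j, M i j = t) ∧ (∀ j, ∑ i, M i j = t)

lemma isSemiMagic_iff {t : ℕ} {M : Matrix (Fin 3) (Fin 3) ℕ} :
    IsSemiMagic t M ↔
      M 0 0 + M 0 1 + M 0 2 = t ∧ M 1 0 + M 1 1 + M 1 2 = t ∧ M 2 0 + M 2 1 + M 2 2 = t ∧
      M 0 0 + M 1 0 + M 2 0 = t ∧ M 0 1 + M 1 1 + M 2 1 = t ∧ M 0 2 + M 1 2 + M 2 2 = t := by
  simp only [IsSemiMagic, Fin.forall_fin_succ, Fin.sum_univ_three, IsEmpty.forall_iff]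
  tauto

/-- `∑ σ, v σ • σ.permMatrix ℕ` for the permutations of `Fin 3`: `v 0, v 1, v 2` are the
coefficients of the identity and the 3-cycles `(0 1 2)`, `(0 2 1)`, and `v 3, v 4, v 5` those of
the transpositions `(0 1)`, `(0 2)`, `(1 2)`. -/
def permMatrixCombination (v : Fin 6 → ℕ) : Matrix (Fin 3) (Fin 3) ℕ :=
  !![v 0 + v 5, v 1 + v 3, v 2 + v 4;
     v 2 + v 3, v 0 + v 4, v 1 + v 5;
     v 1 + v 4, v 2 + v 5, v 0 + v 3]

def IsReducedCoeffs (v : Fin 6 → ℕ) : Prop := v 0 = 0 ∨ v 1 = 0 ∨ v 2 = 0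

/-- If `M = permMatrixCombination v` then, in `ℤ`, `v 1 - v 0 = M 1 2 - M 0 0` and
`v 2 - v 0 = M 1 0 - M 2 2`, so `IsReducedCoeffs v` forces
`v 0 = max 0 (max (M 0 0 - M 1 2) (M 2 2 - M 1 0))`; truncated subtraction supplies the `0`. -/
def reducedCoeffs (M : Matrix (Fin 3) (Fin 3) ℕ) : Fin 6 → ℕ :=
  let a := max (M 0 0 - M 1 2) (M 2 2 - M 1 0)
  ![a, a + M 1 2 - M 0 0, a + M 1 0 - M 2 2, M 2 2 - a, M 1 1 - a, M 0 0 - a]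

section Decomposition

variable {t : ℕ} {v : Fin 6 → ℕ} {M : Matrix (Fin 3) (Fin 3) ℕ}

lemma isSemiMagic_permMatrixCombination (hv : ∑ i, v i = t) :
    IsSemiMagic t (permMatrixCombination v) := by
  rw [Fin.sum_univ_six] at hv
  simp [isSemiMagic_iff, permMatrixCombination]
  omega

lemma isReducedCoeffs_reducedCoeffs (M : Matrix (Fin 3) (Fin 3) ℕ) :
    IsReducedCoeffs (reducedCoeffs M) := by
  simp [IsReducedCoeffs, reducedCoeffs]
  omega

lemma sum_reducedCoeffs (hM : IsSemiMagic t M) : ∑ i, reducedCoeffs M i = t := by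
  rw [isSemiMagic_iff] at hM
  simp [reducedCoeffs, Fin.sum_univ_six]
  omega

lemma permMatrixCombination_reducedCoeffs (hM : IsSemiMagic t M) :
    permMatrixCombination (reducedCoeffs M) = M := by
  rw [isSemiMagic_iff] at hM
  ext i j
  fin_cases i <;> fin_cases j <;> simp [permMatrixCombination, reducedCoeffs] <;> omega

lemma reducedCoeffs_permMatrixCombination (hv : IsReducedCoeffs v) :
    reducedCoeffs (permMatrixCombination v) = v := by
  rw [IsReducedCoeffs] at hv
  ext i
  fin_cases i <;> simp [permMatrixCombination, reducedCoeffs] <;> omega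

def semiMagicEquivReducedCoeffs (t : ℕ) :
    {M : Matrix (Fin 3) (Fin 3) ℕ // IsSemiMagic t M} ≃
      {v : Fin 6 → ℕ // ∑ i, v i = t ∧ IsReducedCoeffs v} where
  toFun M := ⟨reducedCoeffs M, sum_reducedCoeffs M.2, isReducedCoeffs_reducedCoeffs M⟩
  invFun v := ⟨permMatrixCombination v, isSemiMagic_permMatrixCombination v.2.1⟩
  left_inv M := Subtype.ext (permMatrixCombination_reducedCoeffs M.2)
  right_inv v := Subtype.ext (reducedCoeffs_permMatrixCombination v.2.2)

def notReducedCoeffsEquiv (t : ℕ) :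
    {v : Fin 6 → ℕ // ∑ i, v i = t ∧ ¬ IsReducedCoeffs v} ≃
      {w : Fin 6 → ℕ // ∑ i, w i + 3 = t} where
  toFun v := ⟨v.1 - ![1, 1, 1, 0, 0, 0], by
    obtain ⟨v, hv, hred⟩ := v
    simp only [IsReducedCoeffs, not_or] at hred
    simp [Fin.sum_univ_six] at hv ⊢
    omega⟩
  invFun w := ⟨w.1 + ![1, 1, 1, 0, 0, 0], by
    obtain ⟨w, hw⟩ := w
    simp [IsReducedCoeffs, Fin.sum_univ_six] at hw ⊢
    omega⟩
  left_inv v := by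
    obtain ⟨v, -, hred⟩ := v
    refine Subtype.ext (tsub_add_cancel_of_le ?_)
    simp only [IsReducedCoeffs, not_or] at hred
    simp [Pi.le_def, Fin.forall_fin_succ]
    omega
  right_inv w := Subtype.ext (add_tsub_cancel_right _ _)

lemma natCard_semiMagic_add_choose (t : ℕ) :
    Nat.card {M : Matrix (Fin 3) (Fin 3) ℕ // IsSemiMagic t M} + (t + 2).choose 5 =
      (t + 5).choose 5 := by
  have : Finite {v : Fin 6 → ℕ // ∑ i, v i = t} := .of_equiv _ (Sym.equivNatSumOfFintype _ t)
  rw [Nat.card_congr (semiMagicEquivReducedCoeffs t), show t + 2 = t + 5 - 3 by omega,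
    ← natCard_sum_add_fin_eq_choose (k := 5) (by norm_num) 3 t,
    ← Nat.card_congr (notReducedCoeffsEquiv t),
    natCard_subtype_and_add_natCard_subtype_and_not, natCard_sum_fin_eq_choose]

/-- The number of 3×3 semi-magic squares with line sum `t` equals
`(1/8)t⁴ + (3/4)t³ + (15/8)t² + (9/4)t + 1`. -/
theorem birkhoff_H3_poly (t : ℕ) :
    (Nat.card {M : Matrix (Fin 3) (Fin 3) ℕ //
      (∀ i, ∑ j, M i j = t) ∧ (∀ j, ∑ i, M i j = t)} : ℚ) =
      (1 / 8) * (t : ℚ) ^ 4 + (3 / 4) * (t : ℚ) ^ 3 + (15 / 8) * (t : ℚ) ^ 2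
        + (9 / 4) * (t : ℚ) + 1 := by
  have hcount := congrArg (Nat.cast : ℕ → ℚ) (natCard_semiMagic_add_choose t)
  push_cast [cast_choose_five] at hcount
  change (Nat.card {M : Matrix (Fin 3) (Fin 3) ℕ // IsSemiMagic t M} : ℚ) = _
  linear_combination hcount
end Decomposition
end

section
/- If H_n is the Ehrhart polynomial of the n-th Birkhoff polytope, then H_n(−1) = H_n(−2) = ... = H_n(−n+1) = 0. -/
/-!
Write `f_G(t)` for the number of `ℕ`-matrices with all line sums `t` and support in `G`. By strong
induction on `G`, `f_G` agrees with a polynomial for `t ≥ 1`. If `G` contains the graph `Γ` of a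
permutation, subtracting its permutation matrix matches level-`t` matrices with level-`(t + 1)`
matrices positive on `Γ`, so by inclusion–exclusion
`f_G(t) = ∑_{T ⊆ Γ} (-1)^|T| f_{G \ T}(t + 1)`; the forward difference of `f_G` is then a
polynomial, hence so is `f_G`. Otherwise Hall's theorem forces `f_G(t) = 0` for `t ≥ 1`.

For `G` the full `n × n` grid, inclusion–exclusion makes the number of positive matrices of level
`t` a polynomial `Φ(t)` for `t ≥ 1`, and subtracting the all-ones matrix gives `Φ(t + n) = H(t)`.
Hence `H(-j) = Φ(n - j)`, which counts positive matrices of level `n - j < n`: there are none.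
-/

open Finset Polynomial

theorem Finset.card_filter_forall_not_eq_sum_powerset {α β : Type*} [DecidableEq β]
    (s : Finset α) (C : Finset β) (P : β → α → Prop) [∀ b a, Decidable (P b a)] :
    (#{a ∈ s | ∀ b ∈ C, ¬P b a} : ℤ) =
      ∑ T ∈ C.powerset, (-1 : ℤ) ^ #T * #{a ∈ s | ∀ b ∈ T, P b a} := by
  simp only [card_filter, Nat.cast_sum, mul_sum, Nat.cast_ite, Nat.cast_one, Nat.cast_zero,
    mul_ite, mul_one, mul_zero]
  rw [sum_comm]
  refine sum_congr rfl fun a _ => ?_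
  have hsub : {T ∈ C.powerset | ∀ b ∈ T, P b a} = {b ∈ C | P b a}.powerset := by
    ext T
    simp only [mem_filter, mem_powerset, subset_iff]
    exact ⟨fun h _ hb => ⟨h.1 hb, h.2 _ hb⟩, fun h => ⟨fun _ hb => (h hb).1, fun _ hb => (h hb).2⟩⟩
  rw [← sum_filter, hsub, sum_powerset_neg_one_pow_card]
  simp only [filter_eq_empty_iff]

theorem Polynomial.exists_eval_eq_sum_range (q : ℚ[X]) :
    ∃ Q : ℚ[X], ∀ m : ℕ, Q.eval (m : ℚ) = ∑ s ∈ range m, q.eval (s : ℚ) := by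
  induction q using Polynomial.induction_on' with
  | add p r hp hr =>
    obtain ⟨P, hP⟩ := hp
    obtain ⟨R, hR⟩ := hr
    exact ⟨P + R, fun m => by simp [hP m, hR m, sum_add_distrib]⟩
  | monomial p a =>
    refine ⟨C (a / (p + 1)) * (bernoulli (p + 1) - C (_root_.bernoulli (p + 1))), fun m => ?_⟩
    have hp : (p + 1 : ℚ) ≠ 0 := by positivity
    simp only [eval_mul, eval_C, eval_sub, eval_monomial, ← mul_sum, ← Nat.succ_eq_add_one,
      ← sum_range_pow_eq_bernoulli_sub]
    field_simp

theorem Polynomial.exists_eval_eq_of_sub_eq_eval {f : ℕ → ℚ} {q : ℚ[X]}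
    (h : ∀ t : ℕ, f (t + 1) - f t = q.eval (t : ℚ)) :
    ∃ P : ℚ[X], ∀ t : ℕ, P.eval (t : ℚ) = f t := by
  obtain ⟨Q, hQ⟩ := q.exists_eval_eq_sum_range
  exact ⟨C (f 0) + Q, fun t => by simp [hQ, eq_sum_range_sub f t, h]⟩

theorem Polynomial.eq_of_eval_natCast_eq {R : Type*} [CommRing R] [IsDomain R] [CharZero R]
    {p q : R[X]} (h : ∀ t : ℕ, 0 < t → p.eval (t : R) = q.eval (t : R)) : p = q := by
  refine eq_of_infinite_eval_eq p q <| Set.infinite_of_injective_forall_mem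
    (f := fun t : ℕ => ((t + 1 : ℕ) : R)) (fun a b hab => ?_) fun t => h (t + 1) t.succ_pos
  simpa using hab

namespace Birkhoff

variable {ι : Type*} [DecidableEq ι]

def onesOn (C : Finset (ι × ι)) : ι → ι → ℕ := fun i j => if (i, j) ∈ C then 1 else 0

theorem onesOn_le_iff {C : Finset (ι × ι)} {M : ι → ι → ℕ} :
    (∀ i j, onesOn C i j ≤ M i j) ↔ ∀ p ∈ C, M p.1 p.2 ≠ 0 := by
  simp only [onesOn, Prod.forall]
  refine ⟨fun h i j hij => ?_, fun h i j => ?_⟩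
  · simpa [hij, Nat.one_le_iff_ne_zero] using h i j
  · split_ifs with hij
    · exact Nat.one_le_iff_ne_zero.2 (h i j hij)
    · exact Nat.zero_le _

variable [Fintype ι]

/-- The lattice points of `t` times the face `{M ∈ B_ι | M = 0 off G}` of the Birkhoff polytope. -/
def magicMatrices (G : Finset (ι × ι)) (t : ℕ) : Finset (ι → ι → ℕ) :=
  {M ∈ Fintype.piFinset fun _ => Fintype.piFinset fun _ => range (t + 1) |
    (∀ i, ∑ j, M i j = t) ∧ (∀ j, ∑ i, M i j = t) ∧ ∀ p ∉ G, M p.1 p.2 = 0}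

variable {G : Finset (ι × ι)} {t : ℕ} {M : ι → ι → ℕ}

theorem mem_magicMatrices : M ∈ magicMatrices G t ↔
    (∀ i, ∑ j, M i j = t) ∧ (∀ j, ∑ i, M i j = t) ∧ ∀ p ∉ G, M p.1 p.2 = 0 := by
  refine ⟨fun h => (mem_filter.1 h).2, fun h => mem_filter.2 ⟨?_, h⟩⟩
  simp only [Fintype.mem_piFinset, mem_range, Nat.lt_succ_iff]
  exact fun i j => h.1 i ▸ single_le_sum (fun _ _ => Nat.zero_le _) (mem_univ j)

theorem magicMatrices_sdiff (G T : Finset (ι × ι)) (t : ℕ) :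
    magicMatrices (G \ T) t = {M ∈ magicMatrices G t | ∀ p ∈ T, M p.1 p.2 = 0} := by
  ext M
  simp only [mem_filter, mem_magicMatrices, mem_sdiff]
  constructor
  · rintro ⟨hrow, hcol, hG⟩
    exact ⟨⟨hrow, hcol, fun p hp => hG p fun h => hp h.1⟩, fun p hp => hG p fun h => h.2 hp⟩
  · rintro ⟨⟨hrow, hcol, hG⟩, hT⟩
    exact ⟨hrow, hcol, fun p hp => if h : p ∈ T then hT p h else hG p fun hG => hp ⟨hG, h⟩⟩

theorem card_filter_onesOn_le (G C : Finset (ι × ι)) (t : ℕ) :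
    (#{M ∈ magicMatrices G t | ∀ i j, onesOn C i j ≤ M i j} : ℤ) =
      ∑ T ∈ C.powerset, (-1 : ℤ) ^ #T * #(magicMatrices (G \ T) t) := by
  simp only [onesOn_le_iff, ne_eq, magicMatrices_sdiff]
  convert card_filter_forall_not_eq_sum_powerset (magicMatrices G t) C
    fun p (M : ι → ι → ℕ) => M p.1 p.2 = 0

theorem card_filter_le_magicMatrices_add {v : ι → ι → ℕ} {r : ℕ} (hv : v ∈ magicMatrices G r)
    (t : ℕ) : #{M ∈ magicMatrices G (t + r) | ∀ i j, v i j ≤ M i j} = #(magicMatrices G t) := by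
  obtain ⟨hvrow, hvcol, hvG⟩ := mem_magicMatrices.1 hv
  refine card_nbij' (· - v) (· + v) (fun M hM => ?_) (fun N hN => ?_)
    (fun M hM => tsub_add_cancel_of_le fun i j => (mem_filter.1 hM).2 i j)
    (fun N _ => add_tsub_cancel_right N v)
  · obtain ⟨hM, hvM⟩ := mem_filter.1 hM
    obtain ⟨hrow, hcol, hG⟩ := mem_magicMatrices.1 hM
    refine mem_magicMatrices.2 ⟨fun i => ?_, fun j => ?_, fun p hp => ?_⟩
    · simp only [Pi.sub_apply]
      rw [sum_tsub_distrib _ fun j _ => hvM i j, hrow, hvrow, Nat.add_sub_cancel]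
    · simp only [Pi.sub_apply]
      rw [sum_tsub_distrib _ fun i _ => hvM i j, hcol, hvcol, Nat.add_sub_cancel]
    · simp [hG p hp]
  · obtain ⟨hrow, hcol, hG⟩ := mem_magicMatrices.1 hN
    refine mem_filter.2 ⟨mem_magicMatrices.2 ⟨fun i => ?_, fun j => ?_, fun p hp => ?_⟩,
      fun i j => Nat.le_add_left _ _⟩
    · simp [sum_add_distrib, hrow, hvrow]
    · simp [sum_add_distrib, hcol, hvcol]
    · simp [hG p hp, hvG p hp]

theorem card_magicMatrices_eq_sum_powerset {C : Finset (ι × ι)} {r : ℕ}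
    (hC : onesOn C ∈ magicMatrices G r) (t : ℕ) :
    (#(magicMatrices G t) : ℤ) =
      ∑ T ∈ C.powerset, (-1 : ℤ) ^ #T * #(magicMatrices (G \ T) (t + r)) := by
  rw [← card_filter_onesOn_le, card_filter_le_magicMatrices_add hC]

theorem exists_perm_of_mem_magicMatrices (ht : 0 < t) (hM : M ∈ magicMatrices G t) :
    ∃ σ : Equiv.Perm ι, ∀ i, (i, σ i) ∈ G := by
  obtain ⟨hrow, hcol, hG⟩ := mem_magicMatrices.1 hM
  have hall : ∀ s : Finset ι, #s ≤ #{j | ∃ i ∈ s, 0 < M i j} := by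
    intro s
    set N : Finset ι := {j | ∃ i ∈ s, 0 < M i j}
    refine Nat.le_of_mul_le_mul_left ?_ ht
    calc t * #s = ∑ i ∈ s, ∑ j, M i j := by simp [hrow, mul_comm]
      _ = ∑ i ∈ s, ∑ j ∈ N, M i j := by
        refine sum_congr rfl fun i hi => (sum_subset (subset_univ N) fun j _ hj => ?_).symm
        by_contra hne
        exact hj (mem_filter.2 ⟨mem_univ j, i, hi, Nat.pos_of_ne_zero hne⟩)
      _ = ∑ j ∈ N, ∑ i ∈ s, M i j := sum_comm
      _ ≤ ∑ j ∈ N, ∑ i, M i j := sum_le_sum fun j _ => sum_le_sum_of_subset (subset_univ s)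
      _ = t * #N := by simp [hcol, mul_comm]
  obtain ⟨f, hf, hfM⟩ := (Fintype.all_card_le_filter_rel_iff_exists_injective _).1 hall
  refine ⟨Equiv.ofBijective f hf.bijective_of_finite, fun i => ?_⟩
  by_contra hi
  exact (hfM i).ne' (hG _ hi)

theorem onesOn_graph_mem_magicMatrices {σ : Equiv.Perm ι} (hσ : ∀ i, (i, σ i) ∈ G) :
    onesOn (univ.image fun i => (i, σ i)) ∈ magicMatrices G 1 := by
  have hmem : ∀ i j, (i, j) ∈ univ.image (fun i => (i, σ i)) ↔ σ i = j := by simp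
  refine mem_magicMatrices.2 ⟨fun i => ?_, fun j => ?_, fun p hp => ?_⟩
  · simp [onesOn, hmem]
  · simp [onesOn, hmem, σ.eq_symm_apply.symm]
  · obtain ⟨i, j⟩ := p
    simp only [onesOn, hmem, ite_eq_right_iff]
    rintro rfl
    exact absurd (hσ i) hp

theorem exists_eval_eq_card_magicMatrices (G : Finset (ι × ι)) :
    ∃ P : ℚ[X], ∀ t : ℕ, 0 < t → P.eval (t : ℚ) = #(magicMatrices G t) := by
  induction G using Finset.strongInduction with
  | H G ih =>
  by_cases hσ : ∃ σ : Equiv.Perm ι, ∀ i, (i, σ i) ∈ G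
  swap
  · refine ⟨0, fun t ht => ?_⟩
    rw [eval_zero, eq_comm, Nat.cast_eq_zero, card_eq_zero, eq_empty_iff_forall_notMem]
    exact fun M hM => hσ (exists_perm_of_mem_magicMatrices ht hM)
  obtain ⟨σ, hσ⟩ := hσ
  set Γ := univ.image fun i => (i, σ i)
  have hΓ : Γ ⊆ G := by simpa [Γ, image_subset_iff] using hσ
  have : ∀ T ∈ Γ.powerset.erase ∅,
      ∃ P : ℚ[X], ∀ t : ℕ, 0 < t → P.eval (t : ℚ) = #(magicMatrices (G \ T) t) := fun T hT =>
    ih _ (sdiff_ssubset ((mem_powerset.1 (mem_of_mem_erase hT)).trans hΓ)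
      (nonempty_iff_ne_empty.2 (ne_of_mem_erase hT)))
  choose! P hP using this
  have hstep : ∀ t : ℕ, (#(magicMatrices G (t + 1)) : ℚ) - #(magicMatrices G t) =
      (-∑ T ∈ Γ.powerset.erase ∅, C ((-1 : ℚ) ^ #T) * (P T).comp (X + 1)).eval (t : ℚ) := by
    intro t
    have h := card_magicMatrices_eq_sum_powerset (onesOn_graph_mem_magicMatrices hσ) t
    rw [← add_sum_erase _ _ (empty_mem_powerset Γ)] at h
    have h' := congrArg (Int.cast : ℤ → ℚ) h
    push_cast at h'
    simp only [card_empty, pow_zero, one_mul, sdiff_empty] at h'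
    simp only [eval_neg, eval_finsetSum, eval_mul, eval_C, eval_comp, eval_add, eval_X, eval_one]
    rw [h', sub_add_cancel_left, neg_inj]
    refine sum_congr rfl fun T hT => ?_
    rw [← Nat.cast_succ, hP T hT (t + 1) t.succ_pos]
  obtain ⟨Q, hQ⟩ := exists_eval_eq_of_sub_eq_eval (f := fun t => (#(magicMatrices G t) : ℚ)) hstep
  exact ⟨Q, fun t _ => hQ t⟩

theorem exists_eval_eq_card_filter_onesOn_le (G C : Finset (ι × ι)) :
    ∃ Φ : ℚ[X], ∀ t : ℕ, 0 < t →
      Φ.eval (t : ℚ) = #{M ∈ magicMatrices G t | ∀ i j, onesOn C i j ≤ M i j} := by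
  choose P hP using fun T : Finset (ι × ι) => exists_eval_eq_card_magicMatrices (G \ T)
  refine ⟨∑ T ∈ C.powerset, Polynomial.C ((-1 : ℚ) ^ #T) * P T, fun t ht => ?_⟩
  simp only [eval_finsetSum, eval_mul, eval_C, hP _ t ht]
  exact_mod_cast (card_filter_onesOn_le G C t).symm

theorem onesOn_univ_mem_magicMatrices :
    onesOn (univ : Finset (ι × ι)) ∈ magicMatrices univ (Fintype.card ι) := by
  simp [mem_magicMatrices, onesOn]

theorem filter_onesOn_univ_le_eq_empty (ht : t < Fintype.card ι) :
    {M ∈ magicMatrices G t | ∀ i j, onesOn (univ : Finset (ι × ι)) i j ≤ M i j} = ∅ := by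
  obtain ⟨i⟩ : Nonempty ι := Fintype.card_pos_iff.1 (by omega)
  refine filter_eq_empty_iff.2 fun M hM hpos => ht.not_ge ?_
  calc Fintype.card ι = ∑ j, onesOn (univ : Finset (ι × ι)) i j := by simp [onesOn]
    _ ≤ ∑ j, M i j := sum_le_sum fun j _ => hpos i j
    _ = t := (mem_magicMatrices.1 hM).1 i

theorem natCard_eq_card_magicMatrices_univ (t : ℕ) :
    Nat.card {M : Matrix ι ι ℕ // (∀ i, ∑ j, M i j = t) ∧ ∀ j, ∑ i, M i j = t} =
      #(magicMatrices (univ : Finset (ι × ι)) t) := by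
  rw [← Nat.card_eq_finsetCard]
  refine Nat.card_congr <| Equiv.subtypeEquivRight fun M => ?_
  exact ⟨fun h => mem_magicMatrices.2 ⟨h.1, h.2, fun p hp => absurd (mem_univ p) hp⟩,
    fun h => ⟨(mem_magicMatrices.1 h).1, (mem_magicMatrices.1 h).2.1⟩⟩

end Birkhoff

open Birkhoff in
theorem birkhoff_ehrhart_zeros_general (n : ℕ) (H : Polynomial ℚ)
    (hH : ∀ t : ℕ, 0 < t →
      H.eval (t : ℚ) = Nat.card {M : Matrix (Fin n) (Fin n) ℕ //
        (∀ i, ∑ j, M i j = t) ∧ (∀ j, ∑ i, M i j = t)}) :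
    ∀ j : ℕ, 1 ≤ j → j ≤ n - 1 → H.eval (-(j : ℚ)) = 0 := by
  intro j hj hjn
  obtain ⟨Φ, hΦ⟩ := exists_eval_eq_card_filter_onesOn_le (univ : Finset (Fin n × Fin n)) univ
  have hHΦ : H = Φ.comp (X + C (n : ℚ)) := by
    refine eq_of_eval_natCast_eq fun t ht => ?_
    have h := card_filter_le_magicMatrices_add (onesOn_univ_mem_magicMatrices (ι := Fin n)) t
    rw [Fintype.card_fin] at h
    rw [hH t ht, natCard_eq_card_magicMatrices_univ, eval_comp, eval_add, eval_X, eval_C,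
      ← Nat.cast_add, hΦ _ (by omega), h]
  have hshift : -(j : ℚ) + n = ((n - j : ℕ) : ℚ) := by
    rw [Nat.cast_sub (by omega)]
    ring
  rw [hHΦ, eval_comp, eval_add, eval_X, eval_C, hshift, hΦ _ (by omega),
    filter_onesOn_univ_le_eq_empty (by rw [Fintype.card_fin]; omega), card_empty, Nat.cast_zero]

/-- If `H` is the Ehrhart polynomial of the `n`-th Birkhoff polytope, then
`H(-1) = H(-2) = ⋯ = H(-n+1) = 0`. -/
theorem birkhoff_ehrhart_zeros (n : ℕ) (hn : 1 ≤ n) (H : Polynomial ℚ)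
    (hH : ∀ t : ℕ, 0 < t →
      H.eval (t : ℚ) = Nat.card {M : Matrix (Fin n) (Fin n) ℕ //
        (∀ i, ∑ j, M i j = t) ∧ (∀ j, ∑ i, M i j = t)}) :
    ∀ j : ℕ, 1 ≤ j → j ≤ n - 1 → H.eval (-(j : ℚ)) = 0 :=
  birkhoff_ehrhart_zeros_general n H hH
end

section
/- The normalized leading coefficient of the Ehrhart polynomial of the third Birkhoff polytope gives vol B_3 = 9/8: precisely, the degree-4 coefficient of H_3 is 1/8, and multiplying by the lattice normalization factor 3^2 = 9 yields 9/8. -/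
/-!
A semi-magic 3 × 3 square with line sum `t` is determined by its upper left 2 × 2 block,
so `t ↦ #B₃(t)` is bounded by `(t + 1) ^ 4`. A polynomial with these values therefore has
degree at most 4, and it is pinned down by the counts 6, 21, 55, 120, 231 at `t = 1, …, 5`:
it is `H₃(t) = t⁴/8 + 3t³/4 + 15t²/8 + 9t/4 + 1`.
-/

open Polynomial Finset Filter

theorem Polynomial.degree_le_of_abs_eval_natCast_le {𝕜 : Type*} [NormedField 𝕜] [LinearOrder 𝕜]
    [IsStrictOrderedRing 𝕜] [OrderTopology 𝕜] [Archimedean 𝕜] {P : 𝕜[X]} {k : ℕ}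
    (h : ∀ᶠ n : ℕ in atTop, |P.eval (n : 𝕜)| ≤ ((n : 𝕜) + 1) ^ k) : P.degree ≤ k := by
  by_contra! hdeg
  have hQ : ((X + C 1 : 𝕜[X]) ^ k).degree = k := by
    rw [degree_pow, degree_X_add_C, nsmul_one]
  have hratio := (abs_div_tendsto_atTop_atTop_of_degree_gt P _ (hQ ▸ hdeg)
    (pow_ne_zero _ (X_add_C_ne_zero 1))).comp tendsto_natCast_atTop_atTop
  obtain ⟨n, hle, hgt⟩ := (h.and (hratio.eventually_gt_atTop 1)).exists
  have hpos : (0 : 𝕜) < ((n : 𝕜) + 1) ^ k := by positivity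
  simp only [Function.comp_apply, eval_pow, eval_add, eval_X, eval_C, abs_div,
    abs_of_pos hpos] at hgt
  rw [one_lt_div hpos] at hgt
  exact hle.not_gt hgt

def semiMagicSquares (n t : ℕ) : Set (Matrix (Fin n) (Fin n) ℕ) :=
  {M | (∀ i, ∑ j, M i j = t) ∧ ∀ j, ∑ i, M i j = t}

/-- The upper left 2 × 2 blocks `(a b; c d)` that complete to a square in `semiMagicSquares 3 t`. -/
def semiMagicCorners (t : ℕ) : Finset (ℕ × ℕ × ℕ × ℕ) :=
  (range (t + 1) ×ˢ range (t + 1) ×ˢ range (t + 1) ×ˢ range (t + 1)).filter fun ⟨a, b, c, d⟩ =>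
    a + b ≤ t ∧ c + d ≤ t ∧ a + c ≤ t ∧ b + d ≤ t ∧ t ≤ a + b + c + d

lemma mem_semiMagicCorners {t a b c d : ℕ} :
    (a, b, c, d) ∈ semiMagicCorners t ↔
      a + b ≤ t ∧ c + d ≤ t ∧ a + c ≤ t ∧ b + d ≤ t ∧ t ≤ a + b + c + d := by
  simp only [semiMagicCorners, mem_filter, mem_product, mem_range]
  omega

def semiMagicSquaresEquivCorners (t : ℕ) : semiMagicSquares 3 t ≃ semiMagicCorners t where
  toFun M := ⟨(M.1 0 0, M.1 0 1, M.1 1 0, M.1 1 1), by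
    obtain ⟨M, hrow, hcol⟩ := M
    have := hrow 0; have := hrow 1; have := hrow 2
    have := hcol 0; have := hcol 1; have := hcol 2
    simp only [Fin.sum_univ_three] at *
    rw [mem_semiMagicCorners]
    omega⟩
  invFun q := ⟨!![q.1.1, q.1.2.1, t - (q.1.1 + q.1.2.1);
      q.1.2.2.1, q.1.2.2.2, t - (q.1.2.2.1 + q.1.2.2.2);
      t - (q.1.1 + q.1.2.2.1), t - (q.1.2.1 + q.1.2.2.2), q.1.1 + q.1.2.1 + q.1.2.2.1 + q.1.2.2.2 - t],
    by
      obtain ⟨⟨a, b, c, d⟩, hq⟩ := q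
      rw [mem_semiMagicCorners] at hq
      constructor <;> intro i <;> fin_cases i <;> simp [Fin.sum_univ_three] <;> omega⟩
  left_inv M := by
    obtain ⟨M, hrow, hcol⟩ := M
    have := hrow 0; have := hrow 1; have := hrow 2
    have := hcol 0; have := hcol 1; have := hcol 2
    simp only [Fin.sum_univ_three] at *
    ext i j
    fin_cases i <;> fin_cases j <;> simp <;> omega
  right_inv _ := rfl

lemma natCard_semiMagicSquares_three (t : ℕ) :
    Nat.card (semiMagicSquares 3 t) = #(semiMagicCorners t) := by
  rw [Nat.card_congr (semiMagicSquaresEquivCorners t), Nat.card_eq_fintype_card,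
    Fintype.card_coe]

lemma card_semiMagicCorners_le (t : ℕ) : #(semiMagicCorners t) ≤ (t + 1) ^ 4 :=
  (card_filter_le _ _).trans_eq (by simp only [card_product, card_range]; ring)

set_option maxRecDepth 100000 in
lemma card_semiMagicCorners_one_to_five :
    #(semiMagicCorners 1) = 6 ∧ #(semiMagicCorners 2) = 21 ∧ #(semiMagicCorners 3) = 55 ∧
      #(semiMagicCorners 4) = 120 ∧ #(semiMagicCorners 5) = 231 := by
  decide

noncomputable def ehrhartB3 : ℚ[X] :=
  C (1 / 8) * X ^ 4 + C (3 / 4) * X ^ 3 + C (15 / 8) * X ^ 2 + C (9 / 4) * X + 1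

lemma degree_ehrhartB3_le : ehrhartB3.degree ≤ 4 := by
  unfold ehrhartB3; compute_degree

lemma coeff_ehrhartB3_four : ehrhartB3.coeff 4 = 1 / 8 := by
  simp [ehrhartB3, coeff_one]

lemma eval_ehrhartB3_eq_card {t : ℕ} (ht : t ∈ Icc 1 5) :
    ehrhartB3.eval (t : ℚ) = #(semiMagicCorners t) := by
  obtain ⟨h1, h2, h3, h4, h5⟩ := card_semiMagicCorners_one_to_five
  obtain ⟨hlo, hhi⟩ := mem_Icc.mp ht
  interval_cases t <;> norm_num [ehrhartB3, h1, h2, h3, h4, h5]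

/-- If `H` is the Ehrhart polynomial of the third Birkhoff polytope (counting
3×3 semi-magic squares), then its degree-4 coefficient is `1/8`, and
multiplying by the lattice normalization factor `3² = 9` yields
`vol B₃ = 9/8`. -/
theorem birkhoff_B3_volume (H : Polynomial ℚ)
    (hH : ∀ t : ℕ, 0 < t →
      H.eval (t : ℚ) = Nat.card {M : Matrix (Fin 3) (Fin 3) ℕ //
        (∀ i, ∑ j, M i j = t) ∧ (∀ j, ∑ i, M i j = t)}) :
    H.coeff 4 = 1 / 8 ∧ (3 : ℚ) ^ 2 * H.coeff 4 = 9 / 8 := by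
  have hcount (t : ℕ) (ht : 0 < t) : H.eval (t : ℚ) = #(semiMagicCorners t) :=
    (hH t ht).trans (congrArg Nat.cast (natCard_semiMagicSquares_three t))
  have hdeg : H.degree ≤ 4 := degree_le_of_abs_eval_natCast_le <|
    (eventually_gt_atTop 0).mono fun t ht => by
      rw [hcount t ht, abs_of_nonneg (by positivity)]
      exact_mod_cast card_semiMagicCorners_le t
  have hH3 : H = ehrhartB3 := by
    refine eq_of_degree_sub_lt_of_eval_finset_eq ((Icc 1 5).image (Nat.cast : ℕ → ℚ)) ?_ ?_
    · rw [card_image_of_injective _ Nat.cast_injective, Nat.card_Icc]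
      exact (degree_sub_le _ _).trans_lt
        ((max_le hdeg degree_ehrhartB3_le).trans_lt (by decide))
    · simp only [mem_image]
      rintro _ ⟨t, ht, rfl⟩
      rw [hcount t (mem_Icc.mp ht).1, eval_ehrhartB3_eq_card ht]
  rw [hH3, coeff_ehrhartB3_four]
  norm_num
end
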